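/- For every density matrix σ on ℂ² ⊗ ℂ², with x_{jk} = ⟨φʲ, σ φᵏ⟩, one has 3·Tr((σ ⊗ σ)·K₅⁺) − 5·Tr((σ ⊗ σ)·K₃⁻) = (x₁₁−x₂₂)² + (x₂₂−x₃₃)² + (x₃₃−x₁₁)² + 4·((Im x₁₂)² + (Im x₂₃)² + (Im x₃₁)²) + 6·(|x₁₂|² + |x₂₃|² + |x₃₁|²); in particular 3·Tr((σ ⊗ σ)·K₅⁺) ≥ 5·Tr((σ ⊗ σ)·K₃⁻). -/

import Mathlib

open Matrix
open scoped Matrix Kronecker ComplexOrder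

noncomputable section

/-- Index type of `ℂ² ⊗ ℂ²`. -/
abbrev Q : Type := Fin 2 × Fin 2

/-- The standard basis vector `|ab⟩` of `ℂ² ⊗ ℂ²`. -/
def ket (a b : Fin 2) : Q → ℂ := fun p => if p = (a, b) then 1 else 0

/-- The Bell basis `φ⁰, φ¹, φ², φ³` of `ℂ² ⊗ ℂ²`. -/
def bell : Fin 4 → Q → ℂ
  | 0 => fun p => (ket 0 0 p + ket 1 1 p) / (Real.sqrt 2 : ℂ)
  | 1 => fun p => Complex.I * (ket 0 1 p + ket 1 0 p) / (Real.sqrt 2 : ℂ)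
  | 2 => fun p => (-ket 0 1 p + ket 1 0 p) / (Real.sqrt 2 : ℂ)
  | 3 => fun p => Complex.I * (ket 0 0 p - ket 1 1 p) / (Real.sqrt 2 : ℂ)

/-- The product basis `e^{jk} = φʲ ⊗ φᵏ` of `(ℂ²⊗ℂ²)⊗(ℂ²⊗ℂ²)`. -/
def e (j k : Fin 4) : Q × Q → ℂ := fun pq => bell j pq.1 * bell k pq.2

/-- Rank-one operator `|v⟩⟨v|`. -/
def outer {m : Type*} (v : m → ℂ) : Matrix m m ℂ := vecMulVec v (star v)

/-- Orthogonal projection onto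
`span{e^{jk}+e^{kj} : 1≤j<k≤3} ∪ {e^{11}−e^{22}, e^{22}−e^{33}}`. -/
def K5 : Matrix (Q × Q) (Q × Q) ℂ :=
  (1 / 2 : ℂ) • (outer (e 1 2 + e 2 1) + outer (e 2 3 + e 3 2) + outer (e 3 1 + e 1 3)) +
    (1 / 2 : ℂ) • outer (e 1 1 - e 2 2) +
    (1 / 6 : ℂ) • outer (e 1 1 + e 2 2 - (2 : ℂ) • e 3 3)

/-- Orthogonal projection onto `span{e^{11}+e^{22}+e^{33}}`. -/
def K1 : Matrix (Q × Q) (Q × Q) ℂ :=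
  (1 / 3 : ℂ) • outer (e 1 1 + e 2 2 + e 3 3)

/-- Orthogonal projection onto `span{e^{jk}−e^{kj} : 1≤j<k≤3}`. -/
def K3m : Matrix (Q × Q) (Q × Q) ℂ :=
  (1 / 2 : ℂ) • (outer (e 1 2 - e 2 1) + outer (e 2 3 - e 3 2) + outer (e 3 1 - e 1 3))

/-- Orthogonal projection onto `span{e^{00}}`. -/
def L1 : Matrix (Q × Q) (Q × Q) ℂ := outer (e 0 0)

/-- Orthogonal projection onto `span{e^{0j}+e^{j0} : j=1,2,3}`. -/
def L3p : Matrix (Q × Q) (Q × Q) ℂ :=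
  (1 / 2 : ℂ) • (outer (e 0 1 + e 1 0) + outer (e 0 2 + e 2 0) + outer (e 0 3 + e 3 0))

/-- Orthogonal projection onto `span{e^{0j}−e^{j0} : j=1,2,3}`. -/
def L3m : Matrix (Q × Q) (Q × Q) ℂ :=
  (1 / 2 : ℂ) • (outer (e 0 1 - e 1 0) + outer (e 0 2 - e 2 0) + outer (e 0 3 - e 3 0))

/-- The matrix elements `x_{jk} = ⟨φʲ, σ φᵏ⟩` of a state `σ` in the Bell basis. -/
def x (σ : Matrix Q Q ℂ) (j k : Fin 4) : ℂ := star (bell j) ⬝ᵥ σ.mulVec (bell k)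

/-!
In the product basis `e^{jk}` the state `σ ⊗ σ` has matrix elements
`⟨e^{jk}, (σ ⊗ σ) e^{lm}⟩ = x_{jl} x_{km}`, and `K₅⁺`, `K₃⁻` are sums of rank-one projections
onto combinations of the `e^{jk}`. Hence both traces are explicit quadratic polynomials in the
`x_{jk}`; once `x_{kj} = conj x_{jk}` (σ is Hermitian) is substituted, the difference is a ring
identity. The diagonal `x_{jj}` are real, so the right-hand side is a real sum of squares.
-/

lemma Matrix.trace_mul_outer {m : Type*} [Fintype m] (M : Matrix m m ℂ) (v : m → ℂ) :
    (M * outer v).trace = star v ⬝ᵥ M *ᵥ v := by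
  rw [outer, mul_vecMulVec, trace_vecMulVec, dotProduct_comm]

lemma Matrix.dotProduct_kronecker_mulVec_prod {R m n p q : Type*} [CommSemiring R]
    [Fintype m] [Fintype n] [Fintype p] [Fintype q]
    (A : Matrix m p R) (B : Matrix n q R) (u : m → R) (v : n → R) (w : p → R) (z : q → R) :
    (fun i : m × n => u i.1 * v i.2) ⬝ᵥ (A ⊗ₖ B) *ᵥ (fun j : p × q => w j.1 * z j.2) =
      (u ⬝ᵥ A *ᵥ w) * (v ⬝ᵥ B *ᵥ z) := by
  have hmulVec : (A ⊗ₖ B) *ᵥ (fun j : p × q => w j.1 * z j.2) =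
      fun i => (A *ᵥ w) i.1 * (B *ᵥ z) i.2 := by
    ext i
    simp only [mulVec, dotProduct, kroneckerMap_apply, Fintype.sum_prod_type, Fintype.sum_mul_sum]
    exact Finset.sum_congr rfl fun _ _ => Finset.sum_congr rfl fun _ _ => by ring
  rw [hmulVec]
  simp only [dotProduct, Fintype.sum_prod_type, Fintype.sum_mul_sum]
  exact Finset.sum_congr rfl fun _ _ => Finset.sum_congr rfl fun _ _ => by ring

lemma Matrix.IsHermitian.star_dotProduct_mulVec_swap {R n : Type*} [CommSemiring R] [StarRing R]
    [Fintype n] {A : Matrix n n R} (hA : A.IsHermitian) (v w : n → R) :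
    star w ⬝ᵥ A *ᵥ v = star (star v ⬝ᵥ A *ᵥ w) := by
  conv_rhs => rw [star_dotProduct, star_star, star_mulVec, hA.eq, ← dotProduct_mulVec]

open ComplexConjugate in
lemma Complex.ofReal_im_sq (z : ℂ) : ((z.im : ℂ)) ^ 2 = -(z - conj z) ^ 2 / 4 := by
  rw [Complex.sub_conj]
  push_cast
  rw [mul_pow, Complex.I_sq]
  ring

lemma star_e (j k : Fin 4) : star (e j k) = fun pq => star (bell j pq.1) * star (bell k pq.2) := by
  ext pq
  simp [e]

lemma star_e_dotProduct_kronecker_mulVec_e (σ : Matrix Q Q ℂ) (j k l m : Fin 4) :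
    star (e j k) ⬝ᵥ (σ ⊗ₖ σ) *ᵥ e l m = x σ j l * x σ k m := by
  rw [star_e]
  exact dotProduct_kronecker_mulVec_prod σ σ (star (bell j)) (star (bell k)) (bell l) (bell m)

lemma x_swap {σ : Matrix Q Q ℂ} (hσ : σ.IsHermitian) (j k : Fin 4) :
    x σ k j = star (x σ j k) :=
  hσ.star_dotProduct_mulVec_swap _ _

lemma ofReal_re_x_self {σ : Matrix Q Q ℂ} (hσ : σ.IsHermitian) (j : Fin 4) :
    ((x σ j j).re : ℂ) = x σ j j :=
  Complex.conj_eq_iff_re.mp (x_swap hσ j j).symm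

theorem three_mul_trace_K5_sub_five_mul_trace_K3m {σ : Matrix Q Q ℂ} (hσ : σ.IsHermitian) :
    3 * ((σ ⊗ₖ σ) * K5).trace - 5 * ((σ ⊗ₖ σ) * K3m).trace =
      (x σ 1 1 - x σ 2 2) ^ 2 + (x σ 2 2 - x σ 3 3) ^ 2 + (x σ 3 3 - x σ 1 1) ^ 2 +
      4 * ((((x σ 1 2).im : ℂ)) ^ 2 + (((x σ 2 3).im : ℂ)) ^ 2 +
        (((x σ 3 1).im : ℂ)) ^ 2) +
      6 * (((‖x σ 1 2‖ : ℂ)) ^ 2 + ((‖x σ 2 3‖ : ℂ)) ^ 2 + ((‖x σ 3 1‖ : ℂ)) ^ 2) := by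
  simp only [K5, K3m, Matrix.mul_add, Matrix.mul_smul, trace_add, trace_smul, trace_mul_outer,
    star_add, star_sub, star_smul, star_ofNat, mulVec_add, mulVec_sub, mulVec_smul,
    add_dotProduct, sub_dotProduct, smul_dotProduct, dotProduct_add, dotProduct_sub,
    dotProduct_smul, star_e_dotProduct_kronecker_mulVec_e, smul_eq_mul, Complex.ofReal_im_sq,
    ← Complex.mul_conj', ← Complex.star_def, ← x_swap hσ]
  ring

theorem five_mul_re_trace_K3m_le {σ : Matrix Q Q ℂ} (hσ : σ.IsHermitian) :
    5 * (((σ ⊗ₖ σ) * K3m).trace).re ≤ 3 * (((σ ⊗ₖ σ) * K5).trace).re := by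
  have h := congrArg Complex.re (three_mul_trace_K5_sub_five_mul_trace_K3m hσ)
  rw [← ofReal_re_x_self hσ 1, ← ofReal_re_x_self hσ 2, ← ofReal_re_x_self hσ 3] at h
  norm_cast at h
  have hnonneg : 0 ≤ (3 * ((σ ⊗ₖ σ) * K5).trace - 5 * ((σ ⊗ₖ σ) * K3m).trace).re :=
    h ▸ by positivity
  simp only [Complex.sub_re, Complex.mul_re, Complex.re_ofNat, Complex.im_ofNat, zero_mul,
    sub_zero] at hnonneg
  linarith

theorem stmt13_general (σ : Matrix Q Q ℂ) (hσ : σ.PosSemidef) :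
    (3 * ((σ ⊗ₖ σ) * K5).trace - 5 * ((σ ⊗ₖ σ) * K3m).trace =
      (x σ 1 1 - x σ 2 2) ^ 2 + (x σ 2 2 - x σ 3 3) ^ 2 + (x σ 3 3 - x σ 1 1) ^ 2 +
      4 * ((((x σ 1 2).im : ℂ)) ^ 2 + (((x σ 2 3).im : ℂ)) ^ 2 +
        (((x σ 3 1).im : ℂ)) ^ 2) +
      6 * (((‖x σ 1 2‖ : ℂ)) ^ 2 + ((‖x σ 2 3‖ : ℂ)) ^ 2 + ((‖x σ 3 1‖ : ℂ)) ^ 2)) ∧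
    5 * (((σ ⊗ₖ σ) * K3m).trace).re ≤ 3 * (((σ ⊗ₖ σ) * K5).trace).re :=
  ⟨three_mul_trace_K5_sub_five_mul_trace_K3m hσ.isHermitian,
    five_mul_re_trace_K3m_le hσ.isHermitian⟩

/-- `3 Tr((σ⊗σ)K₅⁺) − 5 Tr((σ⊗σ)K₃⁻)` is an explicit sum of squares;
in particular `3 Tr((σ⊗σ)K₅⁺) ≥ 5 Tr((σ⊗σ)K₃⁻)`. -/
theorem stmt13 (σ : Matrix Q Q ℂ) (hσ : σ.PosSemidef) (htr : σ.trace = 1) :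
    (3 * ((σ ⊗ₖ σ) * K5).trace - 5 * ((σ ⊗ₖ σ) * K3m).trace =
      (x σ 1 1 - x σ 2 2) ^ 2 + (x σ 2 2 - x σ 3 3) ^ 2 + (x σ 3 3 - x σ 1 1) ^ 2 +
      4 * ((((x σ 1 2).im : ℂ)) ^ 2 + (((x σ 2 3).im : ℂ)) ^ 2 +
        (((x σ 3 1).im : ℂ)) ^ 2) +
      6 * (((‖x σ 1 2‖ : ℂ)) ^ 2 + ((‖x σ 2 3‖ : ℂ)) ^ 2 + ((‖x σ 3 1‖ : ℂ)) ^ 2)) ∧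
    5 * (((σ ⊗ₖ σ) * K3m).trace).re ≤ 3 * (((σ ⊗ₖ σ) * K5).trace).re :=
  stmt13_general σ hσ
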